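/- arXiv:2206.07358 — 3 statements merged into one kernel-verified Lean document; each statement's English description precedes it below -/
import Mathlib

section
/- If G is contractible to the 4-cycle C_4 via ψ, and u, v are vertices of G lying in the same witness set such that {u,v} is a dominating set of G, then the witness set of the vertex of C_4 at distance 2 from ψ(u) is empty — a contradiction; hence in any C_4-witness structure of G, two vertices forming a dominating set cannot lie in the same witness set or in the union of one witness set. -/
/-! A vertex of the opposite part `W (i + 2)` is neither in `W i` nor adjacent to it, so a
pair inside `W i` cannot dominate it; such a vertex exists since the parts are nonempty. -/

/-- A `C₄`-witness structure of `G`: a partition of the vertices into four nonempty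
connected sets, indexed by `ZMod 4`, where two distinct parts are joined by an edge iff
their indices are consecutive mod 4. -/
def IsC4Witness {V : Type*} (G : SimpleGraph V) (W : ZMod 4 → Set V) : Prop :=
  (∀ v : V, ∃! i, v ∈ W i) ∧
  (∀ i, (W i).Nonempty) ∧
  (∀ i, (G.induce (W i)).Connected) ∧
  (∀ i j, i ≠ j →
    ((∃ u ∈ W i, ∃ v ∈ W j, G.Adj u v) ↔ (j = i + 1 ∨ j = i - 1)))

theorem ZMod.four_add_two_ne (i : ZMod 4) : i + 2 ≠ i := by
  revert i; decide

namespace IsC4Witness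

variable {V : Type*} {G : SimpleGraph V} {W : ZMod 4 → Set V}

theorem eq_of_mem_of_mem (hW : IsC4Witness G W) {x : V} {i j : ZMod 4}
    (hi : x ∈ W i) (hj : x ∈ W j) : i = j :=
  (hW.1 x).unique hi hj

theorem not_adj_of_mem_add_two (hW : IsC4Witness G W) {x y : V} {i : ZMod 4}
    (hx : x ∈ W (i + 2)) (hy : y ∈ W i) : ¬ G.Adj x y := by
  intro hxy
  have hconsec : i = i + 2 + 1 ∨ i = i + 2 - 1 :=
    (hW.2.2.2 (i + 2) i (ZMod.four_add_two_ne i)).mp ⟨x, hx, y, hy, hxy⟩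
  have not_consec : ∀ j : ZMod 4, ¬ (j = j + 2 + 1 ∨ j = j + 2 - 1) := by decide
  exact not_consec i hconsec

theorem ne_of_mem_add_two (hW : IsC4Witness G W) {x y : V} {i : ZMod 4}
    (hx : x ∈ W (i + 2)) (hy : y ∈ W i) : x ≠ y := by
  rintro rfl
  exact ZMod.four_add_two_ne i (hW.eq_of_mem_of_mem hx hy)

end IsC4Witness

theorem c4_witness_dominating_pair_separated_general {V : Type*} (G : SimpleGraph V)
    (W : ZMod 4 → Set V) (hW : IsC4Witness G W) (u v : V)
    (hdom : ∀ x : V, x = u ∨ x = v ∨ G.Adj x u ∨ G.Adj x v) :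
    ∀ i, ¬ (u ∈ W i ∧ v ∈ W i) := by
  rintro i ⟨hu, hv⟩
  obtain ⟨x, hx⟩ := hW.2.1 (i + 2)
  rcases hdom x with rfl | rfl | hxu | hxv
  · exact hW.ne_of_mem_add_two hx hu rfl
  · exact hW.ne_of_mem_add_two hx hv rfl
  · exact hW.not_adj_of_mem_add_two hx hu hxu
  · exact hW.not_adj_of_mem_add_two hx hv hxv

theorem c4_witness_dominating_pair_separated {V : Type*} (G : SimpleGraph V)
    (W : ZMod 4 → Set V) (hW : IsC4Witness G W) (u v : V) (huv : u ≠ v)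
    (hdom : ∀ x : V, x = u ∨ x = v ∨ G.Adj x u ∨ G.Adj x v) :
    ∀ i, ¬ (u ∈ W i ∧ v ∈ W i) :=
  c4_witness_dominating_pair_separated_general G W hW u v hdom
end

section
/- If G is contractible to the 5-cycle C_5 via a witness structure {W0,...,W4}, and D ⊆ V(G) is a dominating set of G contained in a single witness set Wi, then the two witness sets not adjacent to Wi are both empty — a contradiction. Hence no dominating set of G can be contained in a single witness set of a C_5-witness structure. -/
/-- A `C₄`-witness structure of `G`: a partition of the vertices into four nonempty
connected sets, indexed by `ZMod 5`, where two distinct parts are joined by an edge iff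
their indices are consecutive mod 5. -/
def IsC5Witness {V : Type*} (G : SimpleGraph V) (W : ZMod 5 → Set V) : Prop :=
  (∀ v : V, ∃! i, v ∈ W i) ∧
  (∀ i, (W i).Nonempty) ∧
  (∀ i, (G.induce (W i)).Connected) ∧
  (∀ i j, i ≠ j →
    ((∃ u ∈ W i, ∃ v ∈ W j, G.Adj u v) ↔ (j = i + 1 ∨ j = i - 1)))

namespace IsC5Witness

variable {V : Type*} {G : SimpleGraph V} {W : ZMod 5 → Set V}

lemma eq_of_mem_of_mem (hW : IsC5Witness G W) {v : V} {i j : ZMod 5}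
    (hi : v ∈ W i) (hj : v ∈ W j) : i = j :=
  (hW.1 v).unique hi hj

lemma not_adj_of_not_consecutive (hW : IsC5Witness G W) {u v : V} {i j : ZMod 5}
    (hij : i ≠ j) (hj_succ : j ≠ i + 1) (hj_pred : j ≠ i - 1)
    (hu : u ∈ W i) (hv : v ∈ W j) : ¬ G.Adj u v := fun huv =>
  ((hW.2.2.2 i j hij).mp ⟨u, hu, v, hv, huv⟩).elim hj_succ hj_pred

end IsC5Witness

theorem c5_witness_no_dominating_set_in_one_part {V : Type*} (G : SimpleGraph V)
    (W : ZMod 5 → Set V) (hW : IsC5Witness G W) (D : Set V)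
    (hdom : ∀ v : V, v ∈ D ∨ ∃ d ∈ D, G.Adj v d)
    (i : ZMod 5) (hDW : D ⊆ W i) : False := by
  have hfar : ∀ i : ZMod 5, i + 2 ≠ i ∧ i ≠ i + 2 + 1 ∧ i ≠ i + 2 - 1 := by decide
  obtain ⟨hne, hne_succ, hne_pred⟩ := hfar i
  obtain ⟨v, hv⟩ := hW.2.1 (i + 2)
  rcases hdom v with hvD | ⟨d, hdD, hvd⟩
  · exact hne (hW.eq_of_mem_of_mem hv (hDW hvD))
  · exact hW.not_adj_of_not_consecutive hne hne_succ hne_pred hv (hDW hdD) hvd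
end

section
/- Suppose G is contractible to C_5 via witness structure {W0,...,W4} with α^p ∈ W^p for p = 0,...,4 (indices mod 5), and suppose S = {s0,...,s4} ⊆ V(G) induces a 5-cycle such that each s_p is adjacent to α^p and α^{p+1 mod 5}. Then S intersects every witness set W^j. -/
namespace IsC5Witness

variable {V : Type*} {G : SimpleGraph V} {W : ZMod 5 → Set V}

theorem index_eq_or_adj_of_adj (hW : IsC5Witness G W) {i j : ZMod 5} {u v : V}
    (hu : u ∈ W i) (hv : v ∈ W j) (huv : G.Adj u v) : j = i ∨ j = i + 1 ∨ j = i - 1 := by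
  by_cases hij : i = j
  · exact Or.inl hij.symm
  · exact Or.inr ((hW.2.2.2 i j hij).1 ⟨u, hu, v, hv, huv⟩)

theorem mem_or_mem_succ_of_adj_of_adj (hW : IsC5Witness G W) {p : ZMod 5} {a b v : V}
    (ha : a ∈ W p) (hb : b ∈ W (p + 1)) (hva : G.Adj v a) (hvb : G.Adj v b) :
    v ∈ W p ∨ v ∈ W (p + 1) := by
  obtain ⟨k, hk, -⟩ := hW.1 v
  have hka := hW.index_eq_or_adj_of_adj hk ha hva
  have hkb := hW.index_eq_or_adj_of_adj hk hb hvb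
  have hk_eq : k = p ∨ k = p + 1 := by
    have : ∀ k p : ZMod 5, (p = k ∨ p = k + 1 ∨ p = k - 1) →
        (p + 1 = k ∨ p + 1 = k + 1 ∨ p + 1 = k - 1) → k = p ∨ k = p + 1 := by decide
    exact this k p hka hkb
  rcases hk_eq with rfl | rfl
  · exact Or.inl hk
  · exact Or.inr hk

theorem not_adj_of_mem_pred_of_mem_succ (hW : IsC5Witness G W) {j : ZMod 5} {u v : V}
    (hu : u ∈ W (j - 1)) (hv : v ∈ W (j + 1)) : ¬ G.Adj u v := by
  intro huv
  have : ∀ j : ZMod 5, ¬ (j + 1 = j - 1 ∨ j + 1 = j - 1 + 1 ∨ j + 1 = j - 1 - 1) := by decide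
  exact this j (hW.index_eq_or_adj_of_adj hu hv huv)

end IsC5Witness

theorem c5_witness_variable_cycle_meets_every_part_general {V : Type*}
    (G : SimpleGraph V) (W : ZMod 5 → Set V) (hW : IsC5Witness G W)
    (α s : ZMod 5 → V) (hα : ∀ p, α p ∈ W p)
    (hs_cycle : ∀ p q, p ≠ q → (G.Adj (s p) (s q) ↔ (q = p + 1 ∨ q = p - 1)))
    (hsα : ∀ p, G.Adj (s p) (α p) ∧ G.Adj (s p) (α (p + 1))) :
    ∀ j : ZMod 5, ∃ p, s p ∈ W j := by
  intro j
  have hprev := hW.mem_or_mem_succ_of_adj_of_adj (hα (j - 1)) (hα (j - 1 + 1))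
    (hsα (j - 1)).1 (hsα (j - 1)).2
  rw [sub_add_cancel] at hprev
  have hcur := hW.mem_or_mem_succ_of_adj_of_adj (hα j) (hα (j + 1)) (hsα j).1 (hsα j).2
  have hs_adj : G.Adj (s (j - 1)) (s j) :=
    (hs_cycle (j - 1) j (sub_eq_self.not.mpr (by decide))).2 (Or.inl (sub_add_cancel j 1).symm)
  rcases hcur with hj | hj_succ
  · exact ⟨j, hj⟩
  rcases hprev with hj_pred | hj
  · exact (hW.not_adj_of_mem_pred_of_mem_succ hj_pred hj_succ hs_adj).elim
  · exact ⟨j - 1, hj⟩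

theorem c5_witness_variable_cycle_meets_every_part {V : Type*}
    (G : SimpleGraph V) (W : ZMod 5 → Set V) (hW : IsC5Witness G W)
    (α s : ZMod 5 → V) (hα : ∀ p, α p ∈ W p)
    (hs_inj : Function.Injective s)
    (hs_cycle : ∀ p q, p ≠ q → (G.Adj (s p) (s q) ↔ (q = p + 1 ∨ q = p - 1)))
    (hsα : ∀ p, G.Adj (s p) (α p) ∧ G.Adj (s p) (α (p + 1))) :
    ∀ j : ZMod 5, ∃ p, s p ∈ W j :=
  c5_witness_variable_cycle_meets_every_part_general G W hW α s hα hs_cycle hsα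
end
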